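/- arXiv:2106.08162 — 13 statements merged into one kernel-verified Lean document; each statement's English description precedes it below -/
import Mathlib

section
/- Let A, φ, λ, t_d, N be positive real numbers. The fixed-point equation z = N − 2λ(φ·√(A/z) + t_d) has a solution z > 0 if and only if N − 2λt_d > 0 and (N − 2λt_d)^{3/2} ≥ √(27A)·φ·λ. -/
/-- The fixed-point equation `z = N − 2λ(φ·√(A/z) + t_d)` has a positive
solution iff `N − 2λt_d > 0` and `(N − 2λt_d)^{3/2} ≥ √(27A)·φ·λ`. -/
theorem fixed_point_has_positive_solution_iff
    (A φ lam td N : ℝ) (hA : 0 < A) (hφ : 0 < φ) (hlam : 0 < lam)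
    (htd : 0 < td) (hN : 0 < N) :
    (∃ z : ℝ, 0 < z ∧ z = N - 2 * lam * (φ * Real.sqrt (A / z) + td)) ↔
      (0 < N - 2 * lam * td ∧
        Real.sqrt (27 * A) * φ * lam ≤ (N - 2 * lam * td) ^ ((3 : ℝ) / 2)) := by
  set M := N - 2 * lam * td with hM
  set c := 2 * lam * (φ * Real.sqrt A) with hc
  clear_value M c
  have hsA : 0 < Real.sqrt A := Real.sqrt_pos.mpr hA
  have hcpos : 0 < c := by rw [hc]; positivity
  have hcsq : c ^ 2 = 4 * lam ^ 2 * φ ^ 2 * A := by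
    rw [hc]; linear_combination (4 * lam ^ 2 * φ ^ 2) * Real.sq_sqrt hA.le
  constructor
  · rintro ⟨z, hz, hzeq⟩
    have hx : 0 < Real.sqrt z := Real.sqrt_pos.mpr hz
    set x := Real.sqrt z with hxdef
    clear_value x
    have hx2 : x ^ 2 = z := by rw [hxdef]; exact Real.sq_sqrt hz.le
    have hx0 : x ≠ 0 := hx.ne'
    have hAz : Real.sqrt (A / z) = Real.sqrt A / x := by
      rw [Real.sqrt_div hA.le, hxdef]
    have h1 : x ^ 2 = M - c / x := by
      rw [hx2, hzeq, hAz, hM, hc]; ring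
    have key : x ^ 3 + c = M * x := by
      field_simp at h1
      linear_combination h1
    have hMx : 0 < M * x := by rw [← key]; positivity
    have hMpos : 0 < M := by
      rcases mul_pos_iff.mp hMx with ⟨h, _⟩ | ⟨_, h⟩
      · exact h
      · linarith
    refine ⟨hMpos, ?_⟩
    have hceq : c = M * x - x ^ 3 := by linarith
    have hx2M : x ^ 2 < M := by nlinarith [hceq, hcpos, hx]
    have h4M : (0:ℝ) ≤ 4 * M - 3 * x ^ 2 := by nlinarith
    have h27 : 27 * c ^ 2 ≤ 4 * M ^ 3 := by
      nlinarith [mul_nonneg (sq_nonneg (3 * x ^ 2 - M)) h4M, hceq, sq_nonneg x]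
    have hM32 : M ^ ((3:ℝ)/2) = Real.sqrt (M ^ 3) := by
      rw [show (3:ℝ)/2 = (3:ℕ) * (1/2 : ℝ) by norm_num, Real.rpow_mul hMpos.le,
        Real.rpow_natCast, Real.sqrt_eq_rpow]
    rw [hM32]
    have hls : Real.sqrt (27 * A) * φ * lam = Real.sqrt (27 * A * (φ * lam) ^ 2) := by
      rw [show 27 * A * (φ * lam) ^ 2 = (27 * A) * (φ * lam) ^ 2 from by ring,
        Real.sqrt_mul (by positivity : (0:ℝ) ≤ 27 * A),
        Real.sqrt_sq (by positivity : (0:ℝ) ≤ φ * lam)]; ring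
    rw [hls]
    apply Real.sqrt_le_sqrt
    nlinarith [h27, hcsq]
  · rintro ⟨hMpos, hineq⟩
    have hM32 : M ^ ((3:ℝ)/2) = Real.sqrt (M ^ 3) := by
      rw [show (3:ℝ)/2 = (3:ℕ) * (1/2 : ℝ) by norm_num, Real.rpow_mul hMpos.le,
        Real.rpow_natCast, Real.sqrt_eq_rpow]
    rw [hM32] at hineq
    have h27 : 27 * c ^ 2 ≤ 4 * M ^ 3 := by
      have h1 : (Real.sqrt (27 * A) * φ * lam) * (Real.sqrt (27 * A) * φ * lam) ≤
          Real.sqrt (M ^ 3) * Real.sqrt (M ^ 3) :=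
        mul_self_le_mul_self (by positivity) hineq
      rw [Real.mul_self_sqrt (by positivity)] at h1
      nlinarith [Real.sq_sqrt (by positivity : (0:ℝ) ≤ 27 * A), hcsq, h1]
    set m := Real.sqrt (M / 3) with hmdef
    set b := Real.sqrt M with hbdef
    clear_value m b
    have hmpos : 0 < m := by rw [hmdef]; exact Real.sqrt_pos.mpr (by linarith)
    have hm2 : m ^ 2 = M / 3 := by rw [hmdef]; exact Real.sq_sqrt (by linarith)
    have hb2 : b ^ 2 = M := by rw [hbdef]; exact Real.sq_sqrt hMpos.le
    have hmb : m ≤ b := by rw [hmdef, hbdef]; exact Real.sqrt_le_sqrt (by linarith)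
    have hbpos : 0 < b := lt_of_lt_of_le hmpos hmb
    have hfm : m ^ 3 - M * m + c ≤ 0 := by
      have hsq : (2 * M / 3 * m) ^ 2 = 4 * M ^ 3 / 27 := by
        linear_combination (4 * M ^ 2 / 9) * hm2
      have hd : c ^ 2 ≤ (2 * M / 3 * m) ^ 2 := by rw [hsq]; linarith
      have hle : c ≤ 2 * M / 3 * m :=
        le_of_pow_le_pow_left₀ two_ne_zero (by positivity) hd
      have hm3 : m ^ 3 = M / 3 * m := by linear_combination m * hm2
      linarith
    have hfb : (0:ℝ) ≤ b ^ 3 - M * b + c := by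
      have hb3 : b ^ 3 = M * b := by linear_combination b * hb2
      linarith
    have hcont : ContinuousOn (fun y : ℝ => y ^ 3 - M * y + c) (Set.Icc m b) :=
      (((continuous_pow 3).sub (continuous_const.mul continuous_id)).add
        continuous_const).continuousOn
    have hIVT := intermediate_value_Icc hmb hcont
    have h0mem : (0:ℝ) ∈ Set.Icc ((fun y : ℝ => y ^ 3 - M * y + c) m)
        ((fun y : ℝ => y ^ 3 - M * y + c) b) := ⟨hfm, hfb⟩
    obtain ⟨x, hxmem, hfx⟩ := hIVT h0mem
    have hxpos : 0 < x := lt_of_lt_of_le hmpos hxmem.1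
    have hx0 : x ≠ 0 := hxpos.ne'
    simp only at hfx
    refine ⟨x ^ 2, by positivity, ?_⟩
    have hAz : Real.sqrt (A / x ^ 2) = Real.sqrt A / x := by
      rw [Real.sqrt_div hA.le, Real.sqrt_sq hxpos.le]
    rw [hM, hc] at hfx
    rw [hAz]
    field_simp
    linear_combination hfx
end

section
/- Let A, φ, λ, t_d, N be positive real numbers. The fixed-point equation z = N − 2λ(φ·√(A/z) + t_d) has two distinct solutions z > 0 if and only if N − 2λt_d > 0 and (N − 2λt_d)^{3/2} > √(27A)·φ·λ; moreover, the equation never has more than two positive solutions. -/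
private lemma cubic_corr (A φ lam td N : ℝ) (hA : 0 < A) (z : ℝ) (hz : 0 < z) :
    (z = N - 2 * lam * (φ * Real.sqrt (A / z) + td)) ↔
    (Real.sqrt z)^3 - (N - 2*lam*td) * Real.sqrt z + 2*lam*φ*Real.sqrt A = 0 := by
  have hx : 0 < Real.sqrt z := Real.sqrt_pos.mpr hz
  have hzz : Real.sqrt z ^ 2 = z := Real.sq_sqrt hz.le
  rw [Real.sqrt_div hA.le]
  constructor
  · intro h
    have h2 : z * Real.sqrt z = (N - 2 * lam * (φ * (Real.sqrt A / Real.sqrt z) + td)) * Real.sqrt z := by rw [← h]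
    field_simp at h2
    nlinarith [h2, hzz]
  · intro h
    have h2 : (Real.sqrt z)^3 = z * Real.sqrt z := by rw [pow_succ, hzz]
    rw [h2] at h
    field_simp
    nlinarith [h, hzz]

private lemma two_roots_coeffs (b c u v : ℝ) (hne : u ≠ v)
    (e1 : u^3 - b*u + c = 0) (e2 : v^3 - b*v + c = 0) :
    b = u^2 + u*v + v^2 ∧ c = u*v*(u+v) := by
  have hsub : (u - v) * (u^2 + u*v + v^2 - b) = 0 := by linear_combination e1 - e2
  have h1 : u^2 + u*v + v^2 - b = 0 := by
    rcases mul_eq_zero.mp hsub with h | h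
    · exact absurd (sub_eq_zero.mp h) hne
    · exact h
  constructor
  · linarith
  · linear_combination e1 - u * h1

private lemma disc_pos (u v : ℝ) (hu : 0 < u) (hv : 0 < v) (hne : u ≠ v) :
    27 * (u*v*(u+v))^2 < 4 * (u^2+u*v+v^2)^3 := by
  have key : 4 * (u^2+u*v+v^2)^3 - 27 * (u*v*(u+v))^2 = ((u-v)*(2*u+v)*(u+2*v))^2 := by ring
  have hne0 : (u-v)*(2*u+v)*(u+2*v) ≠ 0 := by
    apply mul_ne_zero; apply mul_ne_zero
    · exact sub_ne_zero.mpr hne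
    · positivity
    · positivity
  have h1 : (0:ℝ) < ((u-v)*(2*u+v)*(u+2*v))^2 := by positivity
  linarith

private lemma rpow_three_half_sq (b : ℝ) (hb : 0 < b) : (b ^ ((3:ℝ)/2))^2 = b^3 := by
  rw [← Real.rpow_natCast (b ^ ((3:ℝ)/2)) 2, ← Real.rpow_mul hb.le, ← Real.rpow_natCast b 3]
  norm_num

private lemma exists_two_roots (b c : ℝ) (hb : 0 < b) (hc : 0 < c) (hd : 27 * c^2 < 4 * b^3) :
    ∃ u v : ℝ, 0 < u ∧ 0 < v ∧ u ≠ v ∧ u^3 - b*u + c = 0 ∧ v^3 - b*v + c = 0 := by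
  set f : ℝ → ℝ := fun x => x^3 - b*x + c with hf
  have hcont : Continuous f := by continuity
  set s : ℝ := Real.sqrt (b/3) with hs
  have hs0 : 0 < s := Real.sqrt_pos.mpr (by linarith)
  have hs2 : s^2 = b/3 := Real.sq_sqrt (by linarith)
  have hfs : f s < 0 := by
    have h1 : f s = c - (2*b/3) * s := by
      simp only [hf]
      nlinarith [hs2]
    rw [h1]
    have h2 : c^2 < ((2*b/3)*s)^2 := by nlinarith [hs2]
    have h3 : c < (2*b/3)*s := lt_of_pow_lt_pow_left₀ 2 (by positivity) h2
    linarith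
  have hf0 : f 0 = c := by simp [hf]
  have hiv1 := intermediate_value_Ioo' (le_of_lt hs0) hcont.continuousOn
  have h0mem : (0:ℝ) ∈ Set.Ioo (f s) (f 0) := ⟨hfs, by rw [hf0]; exact hc⟩
  obtain ⟨u, hu_mem, hu⟩ := hiv1 h0mem
  set M : ℝ := Real.sqrt b + 1 with hM
  have hsb : Real.sqrt (b/3) < Real.sqrt b := by
    apply Real.sqrt_lt_sqrt (by linarith) (by linarith)
  have hsM : s < M := by
    have : 0 ≤ Real.sqrt b := Real.sqrt_nonneg b
    simp only [hM, hs]; linarith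
  have hfM : 0 < f M := by
    have hb2 : Real.sqrt b ^ 2 = b := Real.sq_sqrt hb.le
    have hbnn : 0 ≤ Real.sqrt b := Real.sqrt_nonneg b
    simp only [hf, hM]
    nlinarith [hb2, hbnn]
  have hiv2 := intermediate_value_Ioo (le_of_lt hsM) hcont.continuousOn
  obtain ⟨v, hv_mem, hv⟩ := hiv2 ⟨hfs, hfM⟩
  refine ⟨u, v, hu_mem.1, lt_trans hs0 hv_mem.1, ?_, ?_, ?_⟩
  · exact ne_of_lt (lt_trans hu_mem.2 hv_mem.1)
  · simpa [hf] using hu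
  · simpa [hf] using hv

/-- The fixed-point equation `z = N − 2λ(φ·√(A/z) + t_d)` has two distinct
positive solutions iff `N − 2λt_d > 0` and `(N − 2λt_d)^{3/2} > √(27A)·φ·λ`; moreover it
never has more than two positive solutions. -/
theorem fixed_point_two_positive_solutions_iff
    (A φ lam td N : ℝ) (hA : 0 < A) (hφ : 0 < φ) (hlam : 0 < lam)
    (htd : 0 < td) (hN : 0 < N) :
    ((∃ z₁ z₂ : ℝ, z₁ ≠ z₂ ∧ 0 < z₁ ∧ 0 < z₂ ∧
        z₁ = N - 2 * lam * (φ * Real.sqrt (A / z₁) + td) ∧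
        z₂ = N - 2 * lam * (φ * Real.sqrt (A / z₂) + td)) ↔
      (0 < N - 2 * lam * td ∧
        Real.sqrt (27 * A) * φ * lam < (N - 2 * lam * td) ^ ((3 : ℝ) / 2))) ∧
    (∀ z₁ z₂ z₃ : ℝ, 0 < z₁ → 0 < z₂ → 0 < z₃ →
      z₁ = N - 2 * lam * (φ * Real.sqrt (A / z₁) + td) →
      z₂ = N - 2 * lam * (φ * Real.sqrt (A / z₂) + td) →
      z₃ = N - 2 * lam * (φ * Real.sqrt (A / z₃) + td) →
      z₁ = z₂ ∨ z₁ = z₃ ∨ z₂ = z₃) := by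
  have hsA : 0 < Real.sqrt A := Real.sqrt_pos.mpr hA
  have hcpos : 0 < 2*lam*φ*Real.sqrt A := by positivity
  have hc2 : (2*lam*φ*Real.sqrt A)^2 = 4*lam^2*φ^2*A := by
    have : Real.sqrt A ^ 2 = A := Real.sq_sqrt hA.le
    nlinarith [this]
  have hs27 : (Real.sqrt (27*A) * φ * lam)^2 = 27*A*φ^2*lam^2 := by
    have : Real.sqrt (27*A) ^ 2 = 27*A := Real.sq_sqrt (by positivity)
    nlinarith [this]
  constructor
  · constructor
    · rintro ⟨z₁, z₂, hne, hz₁, hz₂, he₁, he₂⟩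
      set u := Real.sqrt z₁ with hu
      set v := Real.sqrt z₂ with hv
      have hu0 : 0 < u := Real.sqrt_pos.mpr hz₁
      have hv0 : 0 < v := Real.sqrt_pos.mpr hz₂
      have huv : u ≠ v := by
        intro h
        apply hne
        have h1 : u^2 = z₁ := Real.sq_sqrt hz₁.le
        have h2 : v^2 = z₂ := Real.sq_sqrt hz₂.le
        rw [← h1, ← h2, h]
      have e1 := (cubic_corr A φ lam td N hA z₁ hz₁).mp he₁
      have e2 := (cubic_corr A φ lam td N hA z₂ hz₂).mp he₂
      obtain ⟨hb, hcval⟩ := two_roots_coeffs _ _ _ _ huv e1 e2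
      have hbpos : 0 < N - 2*lam*td := by rw [hb]; positivity
      refine ⟨hbpos, ?_⟩
      have hd := disc_pos u v hu0 hv0 huv
      rw [← hb, ← hcval] at hd
      apply lt_of_pow_lt_pow_left₀ 2 (Real.rpow_nonneg hbpos.le _)
      rw [rpow_three_half_sq _ hbpos, hs27]
      nlinarith [hc2, hd]
    · rintro ⟨hbpos, hineq⟩
      have hd : 27 * (2*lam*φ*Real.sqrt A)^2 < 4 * (N - 2*lam*td)^3 := by
        have hsq : (Real.sqrt (27*A) * φ * lam)^2 < ((N - 2*lam*td) ^ ((3:ℝ)/2))^2 := by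
          apply pow_lt_pow_left₀ hineq (by positivity)
          norm_num
        rw [rpow_three_half_sq _ hbpos, hs27] at hsq
        nlinarith [hc2, hsq]
      obtain ⟨u, v, hu0, hv0, huv, e1, e2⟩ := exists_two_roots _ _ hbpos hcpos hd
      refine ⟨u^2, v^2, ?_, by positivity, by positivity, ?_, ?_⟩
      · intro h
        apply huv
        nlinarith [h]
      · rw [cubic_corr A φ lam td N hA _ (by positivity), Real.sqrt_sq hu0.le]
        exact e1
      · rw [cubic_corr A φ lam td N hA _ (by positivity), Real.sqrt_sq hv0.le]
        exact e2
  · intro z₁ z₂ z₃ hz₁ hz₂ hz₃ he₁ he₂ he₃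
    by_contra h
    push_neg at h
    obtain ⟨h12, h13, h23⟩ := h
    set u := Real.sqrt z₁
    set v := Real.sqrt z₂
    set w := Real.sqrt z₃
    have hu0 : 0 < u := Real.sqrt_pos.mpr hz₁
    have hv0 : 0 < v := Real.sqrt_pos.mpr hz₂
    have hw0 : 0 < w := Real.sqrt_pos.mpr hz₃
    have huv : u ≠ v := fun h => h12 (by
      have h1 : u^2 = z₁ := Real.sq_sqrt hz₁.le
      have h2 : v^2 = z₂ := Real.sq_sqrt hz₂.le
      rw [← h1, ← h2, h])
    have huw : u ≠ w := fun h => h13 (by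
      have h1 : u^2 = z₁ := Real.sq_sqrt hz₁.le
      have h2 : w^2 = z₃ := Real.sq_sqrt hz₃.le
      rw [← h1, ← h2, h])
    have hvw : v ≠ w := fun h => h23 (by
      have h1 : v^2 = z₂ := Real.sq_sqrt hz₂.le
      have h2 : w^2 = z₃ := Real.sq_sqrt hz₃.le
      rw [← h1, ← h2, h])
    have e1 := (cubic_corr A φ lam td N hA z₁ hz₁).mp he₁
    have e2 := (cubic_corr A φ lam td N hA z₂ hz₂).mp he₂
    have e3 := (cubic_corr A φ lam td N hA z₃ hz₃).mp he₃
    obtain ⟨hb1, -⟩ := two_roots_coeffs _ _ _ _ huv e1 e2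
    obtain ⟨hb2, -⟩ := two_roots_coeffs _ _ _ _ huw e1 e3
    have hsum : (v - w) * (u + v + w) = 0 := by linear_combination hb2 - hb1
    rcases mul_eq_zero.mp hsum with h' | h'
    · exact hvw (sub_eq_zero.mp h')
    · linarith [h', hu0, hv0, hw0]
end

section
/- Let A, φ, λ, t_d, N be positive real numbers, and suppose z₁ and z₂ are two positive solutions of the fixed-point equation z = N − 2λ(φ·√(A/z) + t_d) with z₁ > z₂. Then z₁ > (N − 2λt_d)/3 > z₂; that is, the larger root always satisfies N_i ≥ (N − 2λt_d)/3 and the smaller root violates it. -/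
/-- If `z₁ > z₂ > 0` are two positive solutions of the fixed-point equation
`z = N − 2λ(φ·√(A/z) + t_d)`, then `z₁ > (N − 2λt_d)/3 > z₂`. -/
theorem larger_root_above_threshold_smaller_root_below
    (A φ lam td N : ℝ) (hA : 0 < A) (hφ : 0 < φ) (hlam : 0 < lam)
    (htd : 0 < td) (hN : 0 < N)
    (z₁ z₂ : ℝ) (hz₁ : 0 < z₁) (hz₂ : 0 < z₂)
    (h₁ : z₁ = N - 2 * lam * (φ * Real.sqrt (A / z₁) + td))
    (h₂ : z₂ = N - 2 * lam * (φ * Real.sqrt (A / z₂) + td))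
    (hgt : z₁ > z₂) :
    z₁ > (N - 2 * lam * td) / 3 ∧ (N - 2 * lam * td) / 3 > z₂ := by
  set s₁ := Real.sqrt z₁ with hs1def
  set s₂ := Real.sqrt z₂ with hs2def
  have hs₁ : 0 < s₁ := Real.sqrt_pos.mpr hz₁
  have hs₂ : 0 < s₂ := Real.sqrt_pos.mpr hz₂
  have hq₁ : s₁ ^ 2 = z₁ := Real.sq_sqrt hz₁.le
  have hq₂ : s₂ ^ 2 = z₂ := Real.sq_sqrt hz₂.le
  have hslt : s₂ < s₁ := Real.sqrt_lt_sqrt hz₂.le hgt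
  have hr₁ : Real.sqrt (A / z₁) = Real.sqrt A / s₁ := Real.sqrt_div' A hz₁.le ▸ rfl
  have hr₂ : Real.sqrt (A / z₂) = Real.sqrt A / s₂ := Real.sqrt_div' A hz₂.le ▸ rfl
  have e₁ : s₁ ^ 3 = (N - 2 * lam * td) * s₁ - 2 * lam * φ * Real.sqrt A := by
    have := h₁
    rw [hr₁] at this
    field_simp at this
    nlinarith [hq₁, hs₁]
  have e₂ : s₂ ^ 3 = (N - 2 * lam * td) * s₂ - 2 * lam * φ * Real.sqrt A := by
    have := h₂
    rw [hr₂] at this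
    field_simp at this
    nlinarith [hq₂, hs₂]
  have hM : N - 2 * lam * td = s₁ ^ 2 + s₁ * s₂ + s₂ ^ 2 := by
    have hne : s₁ - s₂ ≠ 0 := by linarith
    have : (s₁ - s₂) * (s₁ ^ 2 + s₁ * s₂ + s₂ ^ 2 - (N - 2 * lam * td)) = 0 := by linear_combination e₁ - e₂
    have := mul_eq_zero.mp this
    rcases this with h | h
    · exact absurd h hne
    · linarith
  constructor
  · nlinarith [hq₁, hslt, hs₂]
  · nlinarith [hq₂, hslt, hs₂]
end

section
/- (Proposition 1 of Lai–Li.) Let A, φ, λ, t_d, N be positive real numbers and let z₁ > z₂ > 0 both solve the fixed-point equation z = N − 2λ(φ·√(A/z) + t_d). For i = 1, 2 define the pickup time t_p^i = φ·√(A/z_i), the utilization ρ_i = 2λ(t_p^i + t_d)/N (which automatically satisfies ρ_i = (N − z_i)/N ∈ (0,1)), the response time t_r^i = (1/(2λ))·ρ_i^{√(2N+2)}/(1 − ρ_i), and, for any real constants c, t_w and any α > 0, β ∈ ℝ, the price p_v^i = c − α(t_r^i + t_p^i) − β(2t_d + t_w). Then t_p^1 < t_p^2, t_r^1 < t_r^2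 and p_v^1 > p_v^2; consequently, for any real constants K, C, w, the profit λ·p_v^1 − N·w − K·C strictly exceeds λ·p_v^2 − N·w − K·C, so the platform's profit is strictly larger under the larger root of the fixed-point equation. -/
/-- Proposition 1 of Lai–Li: under the larger root of the fixed-point
equation, the pickup time and response time are smaller, the price is larger, and hence
the platform's profit is strictly larger. -/
theorem larger_root_yields_higher_profit
    (A φ lam td N : ℝ) (hA : 0 < A) (hφ : 0 < φ) (hlam : 0 < lam)
    (htd : 0 < td) (hN : 0 < N)
    (z₁ z₂ : ℝ) (hz₂ : 0 < z₂) (h21 : z₂ < z₁)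
    (h₁ : z₁ = N - 2 * lam * (φ * Real.sqrt (A / z₁) + td))
    (h₂ : z₂ = N - 2 * lam * (φ * Real.sqrt (A / z₂) + td))
    (tp1 tp2 ρ1 ρ2 tr1 tr2 : ℝ)
    (htp1 : tp1 = φ * Real.sqrt (A / z₁))
    (htp2 : tp2 = φ * Real.sqrt (A / z₂))
    (hρ1 : ρ1 = 2 * lam * (tp1 + td) / N)
    (hρ2 : ρ2 = 2 * lam * (tp2 + td) / N)
    (htr1 : tr1 = (1 / (2 * lam)) * ρ1 ^ Real.sqrt (2 * N + 2) / (1 - ρ1))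
    (htr2 : tr2 = (1 / (2 * lam)) * ρ2 ^ Real.sqrt (2 * N + 2) / (1 - ρ2))
    (c tw α β : ℝ) (hα : 0 < α)
    (pv1 pv2 : ℝ)
    (hpv1 : pv1 = c - α * (tr1 + tp1) - β * (2 * td + tw))
    (hpv2 : pv2 = c - α * (tr2 + tp2) - β * (2 * td + tw)) :
    tp1 < tp2 ∧ tr1 < tr2 ∧ pv1 > pv2 ∧
      ∀ K C w : ℝ, lam * pv1 - N * w - K * C > lam * pv2 - N * w - K * C := by
  have hz₁ : 0 < z₁ := lt_trans hz₂ h21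
  -- pickup times
  have htp : tp1 < tp2 := by
    rw [htp1, htp2]
    have : A / z₁ < A / z₂ := div_lt_div_of_pos_left hA hz₂ h21
    exact mul_lt_mul_of_pos_left
      (Real.sqrt_lt_sqrt (le_of_lt (div_pos hA hz₁)) this) hφ
  -- ρ values via fixed point equations
  have e1 : 2 * lam * (tp1 + td) = N - z₁ := by rw [htp1]; linarith
  have e2 : 2 * lam * (tp2 + td) = N - z₂ := by rw [htp2]; linarith
  have hρ1' : ρ1 = (N - z₁) / N := by rw [hρ1, e1]
  have hρ2' : ρ2 = (N - z₂) / N := by rw [hρ2, e2]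
  have hρ1pos : 0 < ρ1 := by
    rw [hρ1]
    have : 0 < tp1 + td := by
      rw [htp1]; positivity
    positivity
  have hρ2pos : 0 < ρ2 := by
    rw [hρ2]
    have : 0 < tp2 + td := by
      rw [htp2]; positivity
    positivity
  have hρ12 : ρ1 < ρ2 := by
    rw [hρ1', hρ2']
    apply div_lt_div_of_pos_right _ hN
    linarith
  have hρ2lt : ρ2 < 1 := by
    rw [hρ2']
    rw [div_lt_one hN]; linarith
  have hρ1lt : ρ1 < 1 := lt_trans hρ12 hρ2lt
  -- response times
  have he : 0 < Real.sqrt (2 * N + 2) := Real.sqrt_pos.mpr (by linarith)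
  have hpow : ρ1 ^ Real.sqrt (2 * N + 2) < ρ2 ^ Real.sqrt (2 * N + 2) :=
    Real.rpow_lt_rpow (le_of_lt hρ1pos) hρ12 he
  have hpow1pos : 0 < ρ1 ^ Real.sqrt (2 * N + 2) := Real.rpow_pos_of_pos hρ1pos _
  have htr : tr1 < tr2 := by
    rw [htr1, htr2]
    have h1 : 0 < 1 - ρ2 := by linarith
    have h2 : 1 - ρ2 < 1 - ρ1 := by linarith
    have hc : 0 < 1 / (2 * lam) := by positivity
    rw [mul_div_assoc, mul_div_assoc]
    apply mul_lt_mul_of_pos_left _ hc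
    calc ρ1 ^ Real.sqrt (2 * N + 2) / (1 - ρ1)
        < ρ1 ^ Real.sqrt (2 * N + 2) / (1 - ρ2) :=
          div_lt_div_of_pos_left hpow1pos h1 h2
      _ < ρ2 ^ Real.sqrt (2 * N + 2) / (1 - ρ2) := by
          exact (div_lt_div_iff_of_pos_right h1).mpr hpow
  -- prices
  have hpv : pv1 > pv2 := by
    rw [hpv1, hpv2]; nlinarith
  refine ⟨htp, htr, hpv, fun K C w => ?_⟩
  nlinarith
end

section
/- (Lemma 1 of Lai–Li.) Let A, φ, t_d, N be positive real numbers, let I ⊆ ℝ be an open interval of positive reals, and let n : I → ℝ be a differentiable positive function satisfying n(λ) = N − 2λ(φ·√(A/n(λ)) + t_d) for all λ ∈ I. Define t_p(λ) = φ·√(A/n(λ)). Then at every λ₀ ∈ I with n(λ₀) ≠ λ₀·t_p(λ₀), the derivative of t_p satisfies t_p′(λ₀) = (t_p(λ₀) + t_d)·t_p(λ₀) / (n(λ₀) − λ₀·t_p(λ₀)); in particular, if n(λ₀) > λ₀·t_p(λ₀), then t_p′(λ₀) > 0, i.e., the pickup time strictly increases with the demand λ. -/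
/-- Lemma 1 of Lai–Li: along the fixed-point equation for the number of
idle couriers, the pickup time `t_p(λ) = φ·√(A/n(λ))` has derivative
`(t_p + t_d)·t_p / (n − λ·t_p)`; in the normal regime `n > λ·t_p` it is strictly
increasing in the demand `λ`. -/
theorem pickup_time_derivative_in_demand
    (A φ td N : ℝ) (hA : 0 < A) (hφ : 0 < φ) (htd : 0 < td) (hN : 0 < N)
    (a b : ℝ) (ha : 0 ≤ a)
    (n : ℝ → ℝ)
    (hdiff : ∀ x ∈ Set.Ioo a b, DifferentiableAt ℝ n x)
    (hpos : ∀ x ∈ Set.Ioo a b, 0 < n x)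
    (hfix : ∀ x ∈ Set.Ioo a b, n x = N - 2 * x * (φ * Real.sqrt (A / n x) + td)) :
    ∀ l₀ ∈ Set.Ioo a b,
      n l₀ ≠ l₀ * (φ * Real.sqrt (A / n l₀)) →
      deriv (fun l => φ * Real.sqrt (A / n l)) l₀ =
        (φ * Real.sqrt (A / n l₀) + td) * (φ * Real.sqrt (A / n l₀)) /
          (n l₀ - l₀ * (φ * Real.sqrt (A / n l₀))) ∧
      (l₀ * (φ * Real.sqrt (A / n l₀)) < n l₀ →
        0 < deriv (fun l => φ * Real.sqrt (A / n l)) l₀) := by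
  intro l₀ hl₀ hne
  have hm : 0 < n l₀ := hpos _ hl₀
  have hAm : 0 < A / n l₀ := div_pos hA hm
  set m := n l₀ with hmdef
  set s := Real.sqrt (A / m) with hsdef
  have hs : 0 < s := Real.sqrt_pos.mpr hAm
  have hs2 : s ^ 2 = A / m := Real.sq_sqrt hAm.le
  have hAeq : A = s ^ 2 * m := by field_simp at hs2; linarith
  have hdn : DifferentiableAt ℝ n l₀ := hdiff _ hl₀
  set n' := deriv n l₀ with hn'def
  have hdn' : HasDerivAt n n' l₀ := hdn.hasDerivAt
  -- derivative of l ↦ A / n l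
  have hg : HasDerivAt (fun l => A / n l) (-(A * n') / m ^ 2) l₀ := by
    have h := (hasDerivAt_const l₀ A).div hdn' hm.ne'
    exact h.congr_deriv (by rw [zero_mul, zero_sub])
  -- derivative of l ↦ √(A / n l)
  have hsq : HasDerivAt (fun l => Real.sqrt (A / n l))
      (1 / (2 * s) * (-(A * n') / m ^ 2)) l₀ := by
    have h := (Real.hasDerivAt_sqrt hAm.ne').comp l₀ hg
    exact h
  set D : ℝ := φ * (1 / (2 * s) * (-(A * n') / m ^ 2)) with hDdef
  have hf : HasDerivAt (fun l => φ * Real.sqrt (A / n l)) D l₀ := hsq.const_mul φ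
  have hderiv : deriv (fun l => φ * Real.sqrt (A / n l)) l₀ = D := hf.deriv
  -- differentiate the fixed-point equation
  have hr : HasDerivAt (fun l => N - 2 * l * (φ * Real.sqrt (A / n l) + td))
      (-(2 * (φ * s + td) + 2 * l₀ * D)) l₀ := by
    have h1 : HasDerivAt (fun l : ℝ => 2 * l) 2 l₀ := by
      simpa using (hasDerivAt_id l₀).const_mul 2
    have h2 := (hf.add_const td)
    have h := ((h1.mul h2).const_sub N)
    exact h
  have hEq : n =ᶠ[nhds l₀] fun l => N - 2 * l * (φ * Real.sqrt (A / n l) + td) :=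
    Filter.eventuallyEq_of_mem (isOpen_Ioo.mem_nhds hl₀) hfix
  have hn2 : HasDerivAt n (-(2 * (φ * s + td) + 2 * l₀ * D)) l₀ := by
    exact hr.congr_of_eventuallyEq hEq
  have hkey : n' = -(2 * (φ * s + td) + 2 * l₀ * D) :=
    hdn'.unique hn2
  -- algebra
  have hsub : m - l₀ * (φ * s) ≠ 0 := sub_ne_zero.mpr hne
  have hD2 : D = -(φ * s * n') / (2 * m) := by
    rw [hDdef, hAeq]
    field_simp
  have hmain : D = (φ * s + td) * (φ * s) / (m - l₀ * (φ * s)) := by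
    rw [eq_div_iff hsub]
    have hn'eq : n' * (m - l₀ * (φ * s)) = -(2 * (φ * s + td)) * m := by
      have : n' * (2 * m) = -(2 * (φ * s + td) + 2 * l₀ * D) * (2 * m) := by
        rw [← hkey]
      rw [hD2] at hkey
      field_simp at hkey
      nlinarith [hkey]
    rw [hD2]
    have h2m : (2 : ℝ) * m ≠ 0 := by positivity
    rw [div_mul_eq_mul_div, div_eq_iff h2m]
    linear_combination (-(φ * s)) * hn'eq
  constructor
  · rw [hderiv, hmain]
  · intro hlt
    rw [hderiv, hmain]
    apply div_pos
    · positivity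
    · linarith
end

section
/- Let A, φ, λ, t_d be positive real numbers, let I ⊆ ℝ be an open interval, and let n : I → ℝ be a differentiable positive function satisfying n(N) = N − 2λ(φ·√(A/n(N)) + t_d) for all N ∈ I. Define t_p(N) = φ·√(A/n(N)). Then at every N₀ ∈ I with n(N₀) ≠ λ·t_p(N₀), t_p′(N₀) = −(1/2)·t_p(N₀) / (n(N₀) − λ·t_p(N₀)) = −(1/2)·t_p(N₀) / (N₀ − λ(3t_p(N₀) + 2t_d)); in particular, if n(N₀) > λ·t_p(N₀), then t_p′(N₀) < 0, i.e., the pickup time strictly decreases as the courier fleet grows. -/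
/-- along the fixed-point equation for the number of idle couriers as a
function of the fleet size `N`, the pickup time `t_p(N) = φ·√(A/n(N))` has derivative
`−(1/2)·t_p/(n − λ·t_p) = −(1/2)·t_p/(N − λ(3t_p + 2t_d))`; in the normal regime
`n > λ·t_p` it strictly decreases as the fleet grows. -/
theorem pickup_time_derivative_in_fleet_size
    (A φ lam td : ℝ) (hA : 0 < A) (hφ : 0 < φ) (hlam : 0 < lam) (htd : 0 < td)
    (a b : ℝ)
    (n : ℝ → ℝ)
    (hdiff : ∀ x ∈ Set.Ioo a b, DifferentiableAt ℝ n x)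
    (hpos : ∀ x ∈ Set.Ioo a b, 0 < n x)
    (hfix : ∀ x ∈ Set.Ioo a b, n x = x - 2 * lam * (φ * Real.sqrt (A / n x) + td)) :
    ∀ N₀ ∈ Set.Ioo a b,
      n N₀ ≠ lam * (φ * Real.sqrt (A / n N₀)) →
      deriv (fun N => φ * Real.sqrt (A / n N)) N₀ =
        -(1 / 2) * (φ * Real.sqrt (A / n N₀)) /
          (n N₀ - lam * (φ * Real.sqrt (A / n N₀))) ∧
      deriv (fun N => φ * Real.sqrt (A / n N)) N₀ =
        -(1 / 2) * (φ * Real.sqrt (A / n N₀)) /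
          (N₀ - lam * (3 * (φ * Real.sqrt (A / n N₀)) + 2 * td)) ∧
      (lam * (φ * Real.sqrt (A / n N₀)) < n N₀ →
        deriv (fun N => φ * Real.sqrt (A / n N)) N₀ < 0) := by
  intro N₀ hN₀ hne
  have hn0pos : 0 < n N₀ := hpos N₀ hN₀
  set n₀ := n N₀ with hn0
  set s := Real.sqrt (A / n₀) with hs
  have hdivpos : 0 < A / n₀ := div_pos hA hn0pos
  have hspos : 0 < s := Real.sqrt_pos.mpr hdivpos
  have hs2 : s ^ 2 = A / n₀ := Real.sq_sqrt hdivpos.le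
  have hAeq : A = s ^ 2 * n₀ := by
    field_simp at hs2; linarith
  set n' := deriv n N₀ with hn'def
  have hdn : HasDerivAt n n' N₀ := (hdiff N₀ hN₀).hasDerivAt
  have hg : HasDerivAt (fun x => A / n x) (-(A * n') / n₀ ^ 2) N₀ := by
    have := (hasDerivAt_const N₀ A).div hdn (ne_of_gt hn0pos)
    exact this.congr_deriv (by ring)
  have hsq : HasDerivAt (fun x => Real.sqrt (A / n x))
      ((-(A * n') / n₀ ^ 2) / (2 * s)) N₀ := hg.sqrt (ne_of_gt hdivpos)
  have htp : HasDerivAt (fun N => φ * Real.sqrt (A / n N))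
      (φ * ((-(A * n') / n₀ ^ 2) / (2 * s))) N₀ := hsq.const_mul φ
  set tp' := φ * ((-(A * n') / n₀ ^ 2) / (2 * s)) with htp'def
  -- derivative through the fixed point equation
  have heq : n =ᶠ[nhds N₀] fun x => x - 2 * lam * (φ * Real.sqrt (A / n x) + td) := by
    filter_upwards [isOpen_Ioo.mem_nhds hN₀] with x hx using hfix x hx
  have hrhs : HasDerivAt (fun x => x - 2 * lam * (φ * Real.sqrt (A / n x) + td))
      (1 - 2 * lam * tp') N₀ := by
    have h1 : HasDerivAt (fun x => φ * Real.sqrt (A / n x) + td) tp' N₀ := htp.add_const td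
    exact (hasDerivAt_id' N₀).sub (h1.const_mul (2 * lam))
  have hdn2 : HasDerivAt n (1 - 2 * lam * tp') N₀ := hrhs.congr_of_eventuallyEq heq
  have hkey : n' = 1 - 2 * lam * tp' := hdn.unique hdn2
  -- simplify tp'
  have htp2 : tp' = -φ * s * n' / (2 * n₀) := by
    rw [htp'def, hAeq]
    field_simp
  have hden : n₀ - lam * (φ * s) ≠ 0 := sub_ne_zero.mpr hne
  have hval : tp' = -(1 / 2) * (φ * s) / (n₀ - lam * (φ * s)) := by
    have h : tp' * (2 * n₀) = -(φ * s * n') := by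
      rw [htp2]; field_simp
    rw [hkey] at h
    rw [eq_div_iff hden]
    linear_combination (1 / 2) * h
  have hderiv : deriv (fun N => φ * Real.sqrt (A / n N)) N₀ = tp' := htp.deriv
  have hfix0 : n₀ = N₀ - 2 * lam * (φ * s + td) := hfix N₀ hN₀
  refine ⟨by rw [hderiv, hval], ?_, ?_⟩
  · rw [hderiv, hval]
    congr 1
    linarith
  · intro hlt
    rw [hderiv, hval]
    apply div_neg_of_neg_of_pos
    · nlinarith
    · linarith
end

section
/- Let A, φ, λ, N be positive real numbers, let I ⊆ (0,∞) be an open interval, and let n : I → ℝ be a differentiable positive function satisfying n(t_d) = N − 2λ(φ·√(A/n(t_d)) + t_d) for all t_d ∈ I. Define t_p(t_d) = φ·√(A/n(t_d)). Then at every t_d ∈ I with n(t_d) ≠ λ·t_p(t_d), the derivative satisfies n′(t_d) = −2λ·n(t_d) / (n(t_d) − λ·t_p(t_d)); in particular, if n(t_d) > λ·t_p(t_d), then n′(t_d) < 0, i.e., the number of idle couriers strictly decreases as the delivery time grows. -/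
/-- along the fixed-point equation for the number of idle couriers as a
function of the delivery time `t_d`, the derivative satisfies
`n′(t_d) = −2λ·n/(n − λ·t_p)`; in the normal regime `n > λ·t_p` the number of idle
couriers strictly decreases as the delivery time grows. -/
theorem idle_couriers_derivative_in_delivery_time
    (A φ lam N : ℝ) (hA : 0 < A) (hφ : 0 < φ) (hlam : 0 < lam) (hN : 0 < N)
    (a b : ℝ) (ha : 0 ≤ a)
    (n : ℝ → ℝ)
    (hdiff : ∀ x ∈ Set.Ioo a b, DifferentiableAt ℝ n x)
    (hpos : ∀ x ∈ Set.Ioo a b, 0 < n x)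
    (hfix : ∀ x ∈ Set.Ioo a b, n x = N - 2 * lam * (φ * Real.sqrt (A / n x) + x)) :
    ∀ td ∈ Set.Ioo a b,
      n td ≠ lam * (φ * Real.sqrt (A / n td)) →
      deriv n td = -2 * lam * n td / (n td - lam * (φ * Real.sqrt (A / n td))) ∧
      (lam * (φ * Real.sqrt (A / n td)) < n td → deriv n td < 0) := by
  intro td htd hne
  have hn : 0 < n td := hpos td htd
  have hAn : 0 < A / n td := div_pos hA hn
  set s := Real.sqrt (A / n td) with hs_def
  have hs : 0 < s := Real.sqrt_pos.mpr hAn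
  have hs2 : s ^ 2 = A / n td := Real.sq_sqrt hAn.le
  set n' := deriv n td with hn'_def
  have hd : HasDerivAt n n' td := (hdiff td htd).hasDerivAt
  have h1 : HasDerivAt (fun x => A / n x)
      ((0 * n td - A * n') / n td ^ 2) td :=
    (hasDerivAt_const td A).div hd hn.ne'
  have h2 : HasDerivAt (fun x => Real.sqrt (A / n x))
      ((0 * n td - A * n') / n td ^ 2 / (2 * s)) td := h1.sqrt hAn.ne'
  have h3 : HasDerivAt (fun x => N - 2 * lam * (φ * Real.sqrt (A / n x) + x))
      (0 - 2 * lam * (φ * ((0 * n td - A * n') / n td ^ 2 / (2 * s)) + 1)) td := by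
    exact (hasDerivAt_const td N).sub
      (((h2.const_mul φ).add (hasDerivAt_id td)).const_mul (2 * lam))
  -- n agrees with the RHS in a neighborhood of td
  have heq : n =ᶠ[nhds td] fun x => N - 2 * lam * (φ * Real.sqrt (A / n x) + x) := by
    filter_upwards [isOpen_Ioo.mem_nhds htd] with x hx using hfix x hx
  have hd2 : HasDerivAt n
      (0 - 2 * lam * (φ * ((0 * n td - A * n') / n td ^ 2 / (2 * s)) + 1)) td :=
    HasDerivAt.congr_of_eventuallyEq h3 heq
  have key : n' = 0 - 2 * lam * (φ * ((0 * n td - A * n') / n td ^ 2 / (2 * s)) + 1) :=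
    hd.unique hd2
  have hsub : n td - lam * (φ * s) ≠ 0 := sub_ne_zero.mpr hne
  have hA_eq : A = s ^ 2 * n td := by field_simp at hs2; linarith
  have hderiv : n' = -2 * lam * n td / (n td - lam * (φ * s)) := by
    rw [hA_eq] at key
    field_simp at key ⊢
    have hsub' : n td - lam * φ * s ≠ 0 := by rwa [mul_assoc]
    rw [← neg_div, eq_div_iff hsub']
    apply mul_left_cancel₀ hs.ne'
    linear_combination key
  refine ⟨hderiv, fun hlt => ?_⟩
  rw [hderiv]
  apply div_neg_of_neg_of_pos
  · nlinarith
  · linarith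
end

section
/- Let A, φ, θ, λ, N be positive real numbers, let I ⊆ (0,∞) be an open interval, and let n : I → ℝ be a differentiable positive function satisfying, for all K ∈ I, n(K) = N − 2λ(φ·√(A/n(K)) + θ·√(A/K)), where the delivery time is t_d(K) = θ·√(A/K). Define t_p(K) = φ·√(A/n(K)). Then at every K ∈ I with n(K) > λ·t_p(K), we have n′(K) > 0 and t_p′(K) < 0; that is, increasing the charging station density raises the number of idle couriers and strictly shortens the pickup time. -/
set_option maxHeartbeats 1000000 in
/-- with delivery time `t_d(K) = θ·√(A/K)`, in the normal regime
`n(K) > λ·t_p(K)` the number of idle couriers strictly increases and the pickup time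
strictly decreases with the charging station density `K`. -/
theorem idle_couriers_increase_pickup_time_decrease_in_density
    (A φ θ lam N : ℝ) (hA : 0 < A) (hφ : 0 < φ) (hθ : 0 < θ)
    (hlam : 0 < lam) (hN : 0 < N)
    (a b : ℝ) (ha : 0 ≤ a)
    (n : ℝ → ℝ)
    (hdiff : ∀ K ∈ Set.Ioo a b, DifferentiableAt ℝ n K)
    (hpos : ∀ K ∈ Set.Ioo a b, 0 < n K)
    (hfix : ∀ K ∈ Set.Ioo a b,
      n K = N - 2 * lam * (φ * Real.sqrt (A / n K) + θ * Real.sqrt (A / K))) :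
    ∀ K ∈ Set.Ioo a b,
      lam * (φ * Real.sqrt (A / n K)) < n K →
      0 < deriv n K ∧ deriv (fun k => φ * Real.sqrt (A / n k)) K < 0 := by
  intro K hK hregime
  have hK0 : 0 < K := lt_of_le_of_lt ha hK.1
  have hn : 0 < n K := hpos K hK
  set s : ℝ := Real.sqrt (A / n K) with hs_def
  set t : ℝ := Real.sqrt (A / K) with ht_def
  have hsA : 0 < A / n K := div_pos hA hn
  have htA : 0 < A / K := div_pos hA hK0
  have hs : 0 < s := Real.sqrt_pos.mpr hsA
  have ht : 0 < t := Real.sqrt_pos.mpr htA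
  have hs2 : s ^ 2 = A / n K := Real.sq_sqrt hsA.le
  have ht2 : t ^ 2 = A / K := Real.sq_sqrt htA.le
  have hsA' : s ^ 2 * n K = A := by rw [hs2]; field_simp
  have htA' : t ^ 2 * K = A := by rw [ht2]; field_simp
  set u : ℝ := deriv n K with hu_def
  have hu : HasDerivAt n u K := (hdiff K hK).hasDerivAt
  have h1 : HasDerivAt (fun k => A / n k)
      ((0 * n K - A * u) / (n K) ^ 2) K :=
    (hasDerivAt_const K A).div hu hn.ne'
  have h2 : HasDerivAt (fun k => Real.sqrt (A / n k))
      (((0 * n K - A * u) / (n K) ^ 2) / (2 * s)) K :=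
    h1.sqrt hsA.ne'
  have h3 : HasDerivAt (fun k => A / k) ((0 * K - A * 1) / K ^ 2) K :=
    (hasDerivAt_const K A).div (hasDerivAt_id K) hK0.ne'
  have h4 : HasDerivAt (fun k => Real.sqrt (A / k))
      (((0 * K - A * 1) / K ^ 2) / (2 * t)) K :=
    h3.sqrt htA.ne'
  have hg : HasDerivAt
      (fun k => N - 2 * lam * (φ * Real.sqrt (A / n k) + θ * Real.sqrt (A / k)))
      (0 - 2 * lam * (φ * (((0 * n K - A * u) / (n K) ^ 2) / (2 * s))
        + θ * (((0 * K - A * 1) / K ^ 2) / (2 * t)))) K :=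
    (hasDerivAt_const K N).sub (((h2.const_mul φ).add (h4.const_mul θ)).const_mul (2 * lam))
  have hmem : Set.Ioo a b ∈ nhds K := (isOpen_Ioo).mem_nhds hK
  have heq : n =ᶠ[nhds K]
      (fun k => N - 2 * lam * (φ * Real.sqrt (A / n k) + θ * Real.sqrt (A / k))) :=
    Filter.eventuallyEq_of_mem hmem hfix
  have hn' : HasDerivAt n
      (0 - 2 * lam * (φ * (((0 * n K - A * u) / (n K) ^ 2) / (2 * s))
        + θ * (((0 * K - A * 1) / K ^ 2) / (2 * t)))) K :=
    hg.congr_of_eventuallyEq heq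
  have hEq : u = 0 - 2 * lam * (φ * (((0 * n K - A * u) / (n K) ^ 2) / (2 * s))
        + θ * (((0 * K - A * 1) / K ^ 2) / (2 * t))) := hu.unique hn'
  have hid : (0 - 2 * lam * (φ * ((0 * n K - A * u) / n K ^ 2 / (2 * s))
        + θ * ((0 * K - A * 1) / K ^ 2 / (2 * t))))
      = lam * φ * A / ((n K) ^ 2 * s) * u + lam * θ * A / (K ^ 2 * t) := by
    field_simp
    ring
  have hEq2 : u = lam * φ * A / ((n K) ^ 2 * s) * u + lam * θ * A / (K ^ 2 * t) :=
    hEq.trans hid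
  have hdpos : 0 < lam * θ * A / (K ^ 2 * t) := by positivity
  have hclt : lam * φ * A / ((n K) ^ 2 * s) < 1 := by
    rw [div_lt_one (by positivity)]
    nlinarith [mul_lt_mul_of_pos_right hregime (mul_pos hs hn), hsA']
  have h5 : u * (1 - lam * φ * A / ((n K) ^ 2 * s)) = lam * θ * A / (K ^ 2 * t) := by linear_combination hEq2
  have hupos : 0 < u := by nlinarith [h5, hclt, hdpos]
  refine ⟨hupos, ?_⟩
  have hd : deriv (fun k => φ * Real.sqrt (A / n k)) K
      = φ * (((0 * n K - A * u) / (n K) ^ 2) / (2 * s)) := (h2.const_mul φ).deriv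
  rw [hd]
  have hnum : (0 * n K - A * u) < 0 := by nlinarith [mul_pos hA hupos]
  have : ((0 * n K - A * u) / (n K) ^ 2) / (2 * s) < 0 := by
    apply div_neg_of_neg_of_pos
    · exact div_neg_of_neg_of_pos hnum (pow_pos hn 2)
    · linarith
  exact mul_neg_of_pos_of_neg hφ this
end

section
/- Let λ, t_c, M₀ be positive real numbers with λ·t_c < M₀, and set ρ = λ·t_c/M₀ ∈ (0,1). Then the function K ↦ (K/λ)·(M₀/(M₀ − λ·t_c))·ρ^{√(2M₀/K + 2)} is strictly increasing on (0, ∞); that is, for a fixed total charger supply M₀, the average waiting time t_w at charging stations strictly increases with the number K of charging stations. -/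
/-- for a fixed total charger supply `M₀` with occupancy
`ρ = λ·t_c/M₀ ∈ (0,1)`, the waiting time
`K ↦ (K/λ)·(M₀/(M₀ − λt_c))·ρ^{√(2M₀/K + 2)}` is strictly increasing on `(0, ∞)`. -/
theorem waiting_time_strictMonoOn_station_density
    (lam tc M₀ : ℝ) (hlam : 0 < lam) (htc : 0 < tc) (hM₀ : 0 < M₀)
    (h : lam * tc < M₀) :
    StrictMonoOn
      (fun K : ℝ =>
        (K / lam) * (M₀ / (M₀ - lam * tc)) *
          (lam * tc / M₀) ^ Real.sqrt (2 * M₀ / K + 2))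
      (Set.Ioi 0) := by
  intro a ha b hb hab
  simp only [Set.mem_Ioi] at ha hb
  have hρ0 : 0 < lam * tc / M₀ := by positivity
  have hρ1 : lam * tc / M₀ < 1 := (div_lt_one hM₀).mpr h
  have hC : 0 < M₀ / (M₀ - lam * tc) := by
    apply div_pos hM₀; linarith
  have he : Real.sqrt (2 * M₀ / b + 2) < Real.sqrt (2 * M₀ / a + 2) := by
    apply Real.sqrt_lt_sqrt (by positivity)
    have : 2 * M₀ / b < 2 * M₀ / a := by
      apply div_lt_div_of_pos_left (by positivity) ha hab
    linarith
  have hp : (lam * tc / M₀) ^ Real.sqrt (2 * M₀ / a + 2) <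
      (lam * tc / M₀) ^ Real.sqrt (2 * M₀ / b + 2) :=
    Real.rpow_lt_rpow_of_exponent_gt hρ0 hρ1 he
  have h1 : a / lam * (M₀ / (M₀ - lam * tc)) < b / lam * (M₀ / (M₀ - lam * tc)) := by
    apply mul_lt_mul_of_pos_right _ hC
    exact div_lt_div_of_pos_right hab hlam
  exact mul_lt_mul h1 hp.le (Real.rpow_pos_of_pos hρ0 _) (by positivity)
end

section
/- Let λ, t_c, K be positive real numbers. Then the function M ↦ (K/λ)·(λ·t_c/M)^{√(2M/K + 2)} / (1 − λ·t_c/M) is strictly decreasing on the interval (λ·t_c, ∞); that is, for a fixed number K of charging stations, the average waiting time t_w at charging stations strictly decreases as the total charger supply M grows. -/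
/-- for a fixed number `K` of charging stations, the waiting time
`M ↦ (K/λ)·(λt_c/M)^{√(2M/K + 2)} / (1 − λt_c/M)` is strictly decreasing on
`(λ·t_c, ∞)`. -/
theorem waiting_time_strictAntiOn_charger_supply
    (lam tc K : ℝ) (hlam : 0 < lam) (htc : 0 < tc) (hK : 0 < K) :
    StrictAntiOn
      (fun M : ℝ =>
        (K / lam) * (lam * tc / M) ^ Real.sqrt (2 * M / K + 2) / (1 - lam * tc / M))
      (Set.Ioi (lam * tc)) := by
  intro M1 hM1 M2 hM2 h12
  simp only [Set.mem_Ioi] at hM1 hM2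
  have ha : 0 < lam * tc := mul_pos hlam htc
  have hM1p : 0 < M1 := ha.trans hM1
  have hM2p : 0 < M2 := ha.trans hM2
  -- bases
  have hx1 : lam * tc / M1 < 1 := (div_lt_one hM1p).2 hM1
  have hx2 : lam * tc / M2 < 1 := (div_lt_one hM2p).2 hM2
  have hx1p : 0 < lam * tc / M1 := div_pos ha hM1p
  have hx2p : 0 < lam * tc / M2 := div_pos ha hM2p
  have hxlt : lam * tc / M2 < lam * tc / M1 :=
    div_lt_div_of_pos_left ha hM1p h12
  -- exponents
  have he1p : 0 < Real.sqrt (2 * M1 / K + 2) := by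
    apply Real.sqrt_pos.2
    positivity
  have helt : Real.sqrt (2 * M1 / K + 2) < Real.sqrt (2 * M2 / K + 2) := by
    apply Real.sqrt_lt_sqrt (by positivity)
    have : 2 * M1 / K < 2 * M2 / K := by
      apply div_lt_div_of_pos_right _ hK
      linarith
    linarith
  -- numerator comparison
  have hnum : (lam * tc / M2) ^ Real.sqrt (2 * M2 / K + 2)
      < (lam * tc / M1) ^ Real.sqrt (2 * M1 / K + 2) := by
    calc (lam * tc / M2) ^ Real.sqrt (2 * M2 / K + 2)
        < (lam * tc / M2) ^ Real.sqrt (2 * M1 / K + 2) :=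
          Real.rpow_lt_rpow_of_exponent_gt hx2p hx2 helt
      _ < (lam * tc / M1) ^ Real.sqrt (2 * M1 / K + 2) :=
          Real.rpow_lt_rpow hx2p.le hxlt he1p
  -- denominators
  have hd1 : 0 < 1 - lam * tc / M1 := by linarith
  have hd2 : 0 < 1 - lam * tc / M2 := by linarith
  have hdle : 1 - lam * tc / M1 ≤ 1 - lam * tc / M2 := by linarith
  have hc : 0 < K / lam := div_pos hK hlam
  simp only
  calc K / lam * (lam * tc / M2) ^ Real.sqrt (2 * M2 / K + 2) / (1 - lam * tc / M2)
      ≤ K / lam * (lam * tc / M2) ^ Real.sqrt (2 * M2 / K + 2) / (1 - lam * tc / M1) := by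
        apply div_le_div_of_nonneg_left _ hd1 hdle
        positivity
    _ < K / lam * (lam * tc / M1) ^ Real.sqrt (2 * M1 / K + 2) / (1 - lam * tc / M1) := by
        exact (div_lt_div_iff_of_pos_right hd1).2 (mul_lt_mul_of_pos_left hnum hc)
end

section
/- Let A, φ, t_d, N be positive real numbers, let I ⊆ (0,∞) be an open interval, and let n : I → ℝ be a differentiable positive function satisfying n(λ) = N − 2λ(φ·√(A/n(λ)) + t_d) and n(λ) > λ·φ·√(A/n(λ)) for all λ ∈ I. Define t_p(λ) = φ·√(A/n(λ)), ρ_d(λ) = 2λ(t_p(λ) + t_d)/N = (N − n(λ))/N, and t_r(λ) = (t_p(λ) + t_d)·ρ_d(λ)^{√(2N+2) − 1} / (N·(1 − ρ_d(λ))). Then on I the function n is strictly decreasing, while t_p, ρ_d, and t_r are all strictly increasing in λ. -/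
/-- in the normal regime, along the fixed-point equation the number of idle
couriers `n` is strictly decreasing in the demand `λ`, while the pickup time `t_p`,
the utilization `ρ_d` and the response time `t_r` are all strictly increasing in `λ`. -/
theorem monotonicity_in_demand_normal_regime
    (A φ td N : ℝ) (hA : 0 < A) (hφ : 0 < φ) (htd : 0 < td) (hN : 0 < N)
    (a b : ℝ) (ha : 0 ≤ a)
    (n : ℝ → ℝ)
    (hdiff : ∀ x ∈ Set.Ioo a b, DifferentiableAt ℝ n x)
    (hpos : ∀ x ∈ Set.Ioo a b, 0 < n x)
    (hfix : ∀ x ∈ Set.Ioo a b, n x = N - 2 * x * (φ * Real.sqrt (A / n x) + td))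
    (hreg : ∀ x ∈ Set.Ioo a b, x * (φ * Real.sqrt (A / n x)) < n x) :
    StrictAntiOn n (Set.Ioo a b) ∧
    StrictMonoOn (fun l => φ * Real.sqrt (A / n l)) (Set.Ioo a b) ∧
    StrictMonoOn (fun l => 2 * l * (φ * Real.sqrt (A / n l) + td) / N) (Set.Ioo a b) ∧
    StrictMonoOn
      (fun l =>
        (φ * Real.sqrt (A / n l) + td) *
          (2 * l * (φ * Real.sqrt (A / n l) + td) / N) ^ (Real.sqrt (2 * N + 2) - 1) /
          (N * (1 - 2 * l * (φ * Real.sqrt (A / n l) + td) / N)))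
      (Set.Ioo a b) := by
  set s := Real.sqrt A with hs_def
  have hs : 0 < s := Real.sqrt_pos.mpr hA
  -- rewrite sqrt (A / n x) = s / sqrt (n x)
  have hsq : ∀ x ∈ Set.Ioo a b, Real.sqrt (A / n x) = s / Real.sqrt (n x) := by
    intro x hx
    rw [Real.sqrt_div hA.le]
  -- cubic equation for u = sqrt (n x)
  have hcube : ∀ x ∈ Set.Ioo a b,
      (Real.sqrt (n x)) ^ 3 + 2 * x * φ * s + 2 * x * td * Real.sqrt (n x)
        = N * Real.sqrt (n x) := by
    intro x hx
    have hu : 0 < Real.sqrt (n x) := Real.sqrt_pos.mpr (hpos x hx)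
    have hu2 : Real.sqrt (n x) ^ 2 = n x := Real.sq_sqrt (hpos x hx).le
    have h := hfix x hx
    rw [hsq x hx] at h
    have h' : Real.sqrt (n x) ^ 2 = N - 2 * x * (φ * (s / Real.sqrt (n x)) + td) := by
      rw [hu2]; exact h
    field_simp at h'
    nlinarith [h', hu]
  -- regime in terms of u
  have hregu : ∀ x ∈ Set.Ioo a b, x * φ * s < Real.sqrt (n x) ^ 3 := by
    intro x hx
    have hu : 0 < Real.sqrt (n x) := Real.sqrt_pos.mpr (hpos x hx)
    have hu2 : Real.sqrt (n x) ^ 2 = n x := Real.sq_sqrt (hpos x hx).le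
    have h := hreg x hx
    rw [hsq x hx] at h
    have h2 : x * (φ * (s / Real.sqrt (n x))) * Real.sqrt (n x) = x * φ * s := by
      field_simp
    calc x * φ * s = x * (φ * (s / Real.sqrt (n x))) * Real.sqrt (n x) := h2.symm
      _ < n x * Real.sqrt (n x) := mul_lt_mul_of_pos_right h hu
      _ = Real.sqrt (n x) ^ 3 := by linear_combination (-Real.sqrt (n x)) * hu2
  -- main monotonicity of n
  have hanti : StrictAntiOn n (Set.Ioo a b) := by
    intro x hx y hy hxy
    by_contra hle
    push_neg at hle
    have hx0 : 0 < x := lt_of_le_of_lt ha hx.1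
    set u := Real.sqrt (n x) with hu_def
    set v := Real.sqrt (n y) with hv_def
    have hu : 0 < u := Real.sqrt_pos.mpr (hpos x hx)
    have hv : 0 < v := Real.sqrt_pos.mpr (hpos y hy)
    have huv : u ≤ v := Real.sqrt_le_sqrt hle
    have hE1 := hcube x hx
    have hE2 := hcube y hy
    have hr := hregu x hx
    have hid : (u - v) * ((u + v) * u * v - 2 * (φ * s) * x)
        = 2 * (φ * s) * u * (y - x) + 2 * td * (y - x) * u * v := by
      linear_combination v * hE1 - u * hE2
    have hB : 0 < (u + v) * u * v - 2 * (φ * s) * x := by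
      nlinarith [hr, hu, hv, huv, mul_pos hu hv,
        mul_nonneg (mul_nonneg hu.le hu.le) (sub_nonneg.mpr huv),
        mul_nonneg (mul_nonneg hu.le hv.le) (sub_nonneg.mpr huv)]
    have hRHS : 0 < 2 * (φ * s) * u * (y - x) + 2 * td * (y - x) * u * v := by
      have h1 : 0 < y - x := sub_pos.mpr hxy
      have := mul_pos hφ hs
      positivity
    nlinarith [hid, hRHS, mul_nonneg (sub_nonneg.mpr huv) hB.le]
  -- pickup time strictly increasing
  have htp : StrictMonoOn (fun l => φ * Real.sqrt (A / n l)) (Set.Ioo a b) := by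
    intro x hx y hy hxy
    have hnx := hpos x hx
    have hny := hpos y hy
    have hlt : n y < n x := hanti hx hy hxy
    have h1 : A / n x < A / n y := div_lt_div_of_pos_left hA hny hlt
    have h2 : Real.sqrt (A / n x) < Real.sqrt (A / n y) :=
      Real.sqrt_lt_sqrt (by positivity) h1
    exact mul_lt_mul_of_pos_left h2 hφ
  -- utilization via fixed point: 2l(tp+td) = N - n l
  have hutil : ∀ x ∈ Set.Ioo a b,
      2 * x * (φ * Real.sqrt (A / n x) + td) = N - n x := by
    intro x hx
    have := hfix x hx
    linarith
  have hrho : StrictMonoOn (fun l => 2 * l * (φ * Real.sqrt (A / n l) + td) / N)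
      (Set.Ioo a b) := by
    intro x hx y hy hxy
    simp only
    rw [hutil x hx, hutil y hy]
    have hlt : n y < n x := hanti hx hy hxy
    exact div_lt_div_of_pos_right (by linarith) hN
  refine ⟨hanti, htp, hrho, ?_⟩
  -- response time
  intro x hx y hy hxy
  simp only
  set e := Real.sqrt (2 * N + 2) - 1 with he_def
  have he : 0 < e := by
    have h1 : (1 : ℝ) < Real.sqrt (2 * N + 2) := by
      rw [show (1 : ℝ) = Real.sqrt 1 by simp]
      exact Real.sqrt_lt_sqrt (by norm_num) (by linarith)
    simpa [he_def] using sub_pos.mpr h1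
  set rx := 2 * x * (φ * Real.sqrt (A / n x) + td) / N with hrx_def
  set ry := 2 * y * (φ * Real.sqrt (A / n y) + td) / N with hry_def
  have hx0 : 0 < x := lt_of_le_of_lt ha hx.1
  have hy0 : 0 < y := lt_of_le_of_lt ha hy.1
  have htpx : 0 < φ * Real.sqrt (A / n x) + td := by
    have : 0 ≤ Real.sqrt (A / n x) := Real.sqrt_nonneg _
    nlinarith
  have htpy : 0 < φ * Real.sqrt (A / n y) + td := by
    have : 0 ≤ Real.sqrt (A / n y) := Real.sqrt_nonneg _
    nlinarith
  have hrx0 : 0 < rx := by rw [hrx_def]; positivity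
  have hry0 : 0 < ry := by rw [hry_def]; positivity
  have hrxy : rx < ry := hrho hx hy hxy
  have hrx1 : rx < 1 := by
    rw [hrx_def, div_lt_one hN, hutil x hx]
    linarith [hpos x hx]
  have hry1 : ry < 1 := by
    rw [hry_def, div_lt_one hN, hutil y hy]
    linarith [hpos y hy]
  have htpxy : φ * Real.sqrt (A / n x) + td < φ * Real.sqrt (A / n y) + td := by
    have := htp hx hy hxy
    simpa using add_lt_add_right this td
  have hpow : rx ^ e < ry ^ e := Real.rpow_lt_rpow hrx0.le hrxy he
  have hpowx : 0 < rx ^ e := Real.rpow_pos_of_pos hrx0 e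
  have hpowy : 0 < ry ^ e := Real.rpow_pos_of_pos hry0 e
  have hnum : (φ * Real.sqrt (A / n x) + td) * rx ^ e
      < (φ * Real.sqrt (A / n y) + td) * ry ^ e := by
    exact mul_lt_mul htpxy hpow.le hpowx htpy.le
  have hdenx : 0 < N * (1 - rx) := by
    apply mul_pos hN; linarith
  have hdeny : 0 < N * (1 - ry) := by
    apply mul_pos hN; linarith
  have hden : N * (1 - ry) < N * (1 - rx) := by
    apply mul_lt_mul_of_pos_left _ hN; linarith
  calc (φ * Real.sqrt (A / n x) + td) * rx ^ e / (N * (1 - rx))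
      < (φ * Real.sqrt (A / n y) + td) * ry ^ e / (N * (1 - rx)) := by
        exact div_lt_div_of_pos_right hnum hdenx
    _ ≤ (φ * Real.sqrt (A / n y) + td) * ry ^ e / (N * (1 - ry)) := by
        exact div_le_div_of_nonneg_left (by positivity) hdeny hden.le
end

section
/- Fix positive real numbers λ_d and s. The function N ↦ (1/λ_d)·(λ_d·s/N)^{√(2N+2)} / (1 − λ_d·s/N), with N treated as a real variable, is strictly decreasing on the interval (λ_d·s, ∞); that is, for a fixed mean service time, the approximate response time of the delivery queue strictly decreases as the courier fleet size N grows. -/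
/-- for fixed arrival rate `λ_d` and mean service time `s`, the approximate
response time `N ↦ (1/λ_d)·(λ_d·s/N)^{√(2N+2)} / (1 − λ_d·s/N)` is strictly decreasing
on `(λ_d·s, ∞)`. -/
theorem response_time_strictAntiOn_fleet_size
    (lamd s : ℝ) (hlamd : 0 < lamd) (hs : 0 < s) :
    StrictAntiOn
      (fun N : ℝ =>
        (1 / lamd) * (lamd * s / N) ^ Real.sqrt (2 * N + 2) / (1 - lamd * s / N))
      (Set.Ioi (lamd * s)) := by
  intro x hx y hy hxy
  simp only [Set.mem_Ioi] at hx hy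
  have ha : 0 < lamd * s := mul_pos hlamd hs
  have hx0 : 0 < x := ha.trans hx
  have hy0 : 0 < y := ha.trans hy
  set a := lamd * s with hadef
  have hρx : a / x < 1 := (div_lt_one hx0).2 hx
  have hρy : a / y < 1 := (div_lt_one hy0).2 hy
  have hρx0 : 0 < a / x := div_pos ha hx0
  have hρy0 : 0 < a / y := div_pos ha hy0
  have hρlt : a / y < a / x := div_lt_div_of_pos_left ha hx0 hxy
  have hex0 : 0 < Real.sqrt (2 * x + 2) := Real.sqrt_pos.2 (by linarith)
  have hexp : Real.sqrt (2 * x + 2) < Real.sqrt (2 * y + 2) :=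
    Real.sqrt_lt_sqrt (by linarith) (by linarith)
  -- numerator comparison
  have h1 : (a / y) ^ Real.sqrt (2 * y + 2) < (a / y) ^ Real.sqrt (2 * x + 2) :=
    Real.rpow_lt_rpow_of_exponent_gt hρy0 hρy hexp
  have h2 : (a / y) ^ Real.sqrt (2 * x + 2) < (a / x) ^ Real.sqrt (2 * x + 2) :=
    Real.rpow_lt_rpow hρy0.le hρlt hex0
  have hnum : (a / y) ^ Real.sqrt (2 * y + 2) < (a / x) ^ Real.sqrt (2 * x + 2) :=
    h1.trans h2
  have hdx : 0 < 1 - a / x := by linarith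
  have hdy : 0 < 1 - a / y := by linarith
  have hden : 1 - a / x < 1 - a / y := by linarith
  have hnx : 0 < (a / x) ^ Real.sqrt (2 * x + 2) := Real.rpow_pos_of_pos hρx0 _
  have hl : 0 < 1 / lamd := by positivity
  simp only
  rw [div_lt_div_iff₀ hdy hdx]
  have hny0 : 0 ≤ (a / y) ^ Real.sqrt (2 * y + 2) := (Real.rpow_pos_of_pos hρy0 _).le
  nlinarith [mul_pos hl hnx, mul_lt_mul_of_pos_left hnum hl,
    mul_le_mul_of_nonneg_left hny0 hl.le]
end

section
/- Let K, S, t_c be positive real numbers. The function λ ↦ (K/λ)·(λ·t_c/(K·S))^{√(2S+2)} / (1 − λ·t_c/(K·S)) is strictly increasing on the interval (0, K·S/t_c); that is, for K charging stations each with S chargers, the average waiting time t_w at charging stations strictly increases with the customer arrival rate λ. -/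
/-- with `K` stations of `S` chargers each, the waiting time
`λ ↦ (K/λ)·(λ·t_c/(K·S))^{√(2S+2)} / (1 − λ·t_c/(K·S))` is strictly increasing on
`(0, K·S/t_c)`. -/
theorem waiting_time_strictMonoOn_arrival_rate
    (K S tc : ℝ) (hK : 0 < K) (hS : 0 < S) (htc : 0 < tc) :
    StrictMonoOn
      (fun lam : ℝ =>
        (K / lam) * (lam * tc / (K * S)) ^ Real.sqrt (2 * S + 2) /
          (1 - lam * tc / (K * S)))
      (Set.Ioo 0 (K * S / tc)) := by
  intro x hx y hy hxy
  obtain ⟨hx0, hx1⟩ := hx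
  obtain ⟨hy0, hy1⟩ := hy
  have hKS : 0 < K * S := mul_pos hK hS
  set a := Real.sqrt (2 * S + 2) with ha
  have ha1 : 1 < a := by
    rw [ha, show (1:ℝ) = Real.sqrt 1 by simp]
    exact Real.sqrt_lt_sqrt (by norm_num) (by linarith)
  have hρx : 0 < x * tc / (K * S) := by positivity
  have hρxy : x * tc / (K * S) < y * tc / (K * S) := by gcongr
  have hρy1 : y * tc / (K * S) < 1 := by
    rw [div_lt_one hKS]
    calc y * tc < (K * S / tc) * tc := by nlinarith
      _ = K * S := by field_simp
  have hρx1 : x * tc / (K * S) < 1 := lt_trans hρxy hρy1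
  have key : ∀ z : ℝ, 0 < z →
      (K / z) * (z * tc / (K * S)) ^ a / (1 - z * tc / (K * S))
        = (tc / S) * ((z * tc / (K * S)) ^ (a - 1) / (1 - z * tc / (K * S))) := by
    intro z hz
    have hρ : 0 < z * tc / (K * S) := by positivity
    have hKz : K / z = tc / S * (z * tc / (K * S))⁻¹ := by
      field_simp
    rw [Real.rpow_sub hρ, Real.rpow_one, hKz]
    ring
  simp only
  rw [key x hx0, key y hy0]
  have h1 : (x * tc / (K * S)) ^ (a - 1) < (y * tc / (K * S)) ^ (a - 1) :=
    Real.rpow_lt_rpow (le_of_lt hρx) hρxy (by linarith)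
  have htS : 0 < tc / S := by positivity
  have hd : 0 < 1 - y * tc / (K * S) := by linarith
  apply mul_lt_mul_of_pos_left _ htS
  apply div_lt_div₀ h1 (by linarith) (by positivity) hd
end
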